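/- Let s(z) = ∏_{i=1}^n z_i on ℂⁿ, f = Re(s), and restrict to {Im(s) = 0}. Along a solution curve of V = ∇f/|∇f|² (metric g^{īj} = δ_{ij} + O(|z|)) staying outside the cone neighborhood U_ε = {ρ < ε|z|²} of S₀⁺ = {ρ = 0}, where ρ = max_{i,j}||z_i|² − |z_j|²|, one has the differential inequality d(log ρ)/dt ≤ C/ t^{1−1/n} (with t = s as parameter), and consequently lim_{t→0} ρ(t) ≠ 0. -/

import Mathlib

/-!
Write `H(z) = (|z_i|² - |z_j|²)_{i,j}`, so that `ρ = ‖H‖` in the sup norm. Along the flow,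
`V_k z̄_k = (1 + u) (1 + E_k) / (s ∑ 1/|z_m|²)` with `|E_k| ≤ K|z|² ∑ 1/|z_m|`, and the
leading `1`s cancel in `d/dt (|z_i|² - |z_j|²) = 2 Re(V_i z̄_i - V_j z̄_j)`. Since
`∑ 1/|z_m| ≤ s^{1/n} ∑ 1/|z_m|²` (AM-GM and Cauchy-Schwarz), this gives
`‖H'‖ ≤ C |z|² t^{1/n-1} ≤ (C/ε) t^{1/n-1} ‖H‖` outside `U_ε`. Hence `d log ρ/dt ≤ C' t^{1/n-1}`,
and a Grönwall estimate with the integrable weight `t^{1/n-1}` bounds `ρ` below near `t = 0`.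
-/

/-- `s(z) = ∏ᵢ zᵢ` on ℂⁿ. -/
def sProd (n : ℕ) (z : Fin n → ℂ) : ℂ := ∏ i, z i

/-- `ρ(z) = max_{i,j} | |z_i|² − |z_j|² |`, whose zero cone is `S₀⁺`. -/
noncomputable def rhoMax (n : ℕ) (z : Fin n → ℂ) : ℝ :=
  ⨆ i : Fin n, ⨆ j : Fin n, |Complex.normSq (z i) - Complex.normSq (z j)|

/-- The vector field `V = ∇f/|∇f|²` for `f = Re(∏ᵢ zᵢ)` and a perturbed metric
`g^{īj} = δ_{ij} + O(|z|)`: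
`V = Re((∑ᵢ (zᵢ/|zᵢ|²) g^{īj} ∂_j)/(s ∑ᵢ 1/|zᵢ|²))·(1 + O(|z|))`,
given by its complex components; `g` are the metric coefficients and `u` the scalar
`O(|z|)` correction. -/
noncomputable def Vpert (n : ℕ) (g : (Fin n → ℂ) → Fin n → Fin n → ℂ)
    (u : (Fin n → ℂ) → ℝ) (z : Fin n → ℂ) : Fin n → ℂ := fun j =>
  ((1 + u z : ℝ) : ℂ) *
    ((∑ i, z i / (Complex.normSq (z i) : ℂ) * g z i j) /
      (sProd n z * ∑ i, ((Complex.normSq (z i) : ℂ))⁻¹))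

open Complex ComplexConjugate Filter Set Topology

theorem abs_le_norm_of_hasDerivAt_norm {E : Type*} [NormedAddCommGroup E] [NormedSpace ℝ E]
    {f : ℝ → E} {f' : E} {d t : ℝ} (hf : HasDerivAt f f' t)
    (hd : HasDerivAt (fun τ => ‖f τ‖) d t) : |d| ≤ ‖f'‖ := by
  refine le_of_tendsto_of_tendsto (hasDerivAt_iff_tendsto_slope.1 hd).abs
    (hasDerivAt_iff_tendsto_slope.1 hf).norm (Eventually.of_forall fun τ => ?_)
  simp only [slope_def_module, norm_smul, smul_eq_mul, abs_mul, norm_inv, Real.norm_eq_abs,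
    abs_inv]
  exact mul_le_mul_of_nonneg_left (abs_norm_sub_norm_le _ _) (by positivity)

theorem le_div_norm_of_hasDerivAt_log_norm {E : Type*} [NormedAddCommGroup E] [NormedSpace ℝ E]
    {f : ℝ → E} {f' : E} {d t : ℝ} (hf : HasDerivAt f f' t) (hft : f t ≠ 0)
    (hd : HasDerivAt (fun τ => Real.log ‖f τ‖) d t) : d ≤ ‖f'‖ / ‖f t‖ := by
  have hpos : 0 < ‖f t‖ := norm_pos_iff.2 hft
  have hnorm : HasDerivAt (fun τ => ‖f τ‖) (‖f t‖ * d) t := by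
    have hexp := hd.exp
    rw [Real.exp_log hpos] at hexp
    refine hexp.congr_of_eventuallyEq ?_
    filter_upwards [hf.continuousAt.eventually_ne hft] with τ hτ
    exact (Real.exp_log (norm_pos_iff.2 hτ)).symm
  rw [le_div_iff₀ hpos, mul_comm]
  exact (le_abs_self _).trans (abs_le_norm_of_hasDerivAt_norm hf hnorm)

theorem norm_le_mul_exp_sub_of_norm_deriv_right_le {E : Type*} [NormedAddCommGroup E]
    [NormedSpace ℝ E] {f f' : ℝ → E} {Γ c : ℝ → ℝ} {a b : ℝ}
    (hf : ContinuousOn f (Icc a b)) (hf' : ∀ x ∈ Ico a b, HasDerivWithinAt f (f' x) (Ici x) x)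
    (hΓ : ContinuousOn Γ (Icc a b)) (hΓ' : ∀ x ∈ Ico a b, HasDerivWithinAt Γ (c x) (Ici x) x)
    (bound : ∀ x ∈ Ico a b, ‖f' x‖ ≤ c x * ‖f x‖) :
    ∀ x ∈ Icc a b, ‖f x‖ ≤ ‖f a‖ * Real.exp (Γ x - Γ a) := by
  intro x hx
  set B : ℝ → ℝ → ℝ := fun δ y => (‖f a‖ + δ) * Real.exp (Γ y - Γ a + δ * (y - a))
  -- the extra `δ` makes the fence strict, as the comparison principle requires
  have hB : ∀ δ > 0, ‖f x‖ ≤ B δ x := fun δ hδ => by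
    refine image_norm_le_of_norm_deriv_right_lt_deriv_boundary' hf hf'
      (B' := fun y => B δ y * (c y + δ)) ?_ ?_ (fun y hy => ?_) (fun y hy hfy => ?_) hx
    · simp only [B, sub_self, mul_zero, add_zero, Real.exp_zero, mul_one]
      linarith
    · exact continuousOn_const.mul (((hΓ.sub continuousOn_const).add
        (continuousOn_const.mul (continuousOn_id.sub continuousOn_const))).rexp)
    · have := ((((hΓ' y hy).sub_const (Γ a)).add
        (((hasDerivWithinAt_id y _).sub_const a).const_mul δ)).exp).const_mul (‖f a‖ + δ)
      exact this.congr_deriv (by simp only [B, Pi.add_apply, id, mul_one]; ring)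
    · have hBpos : 0 < B δ y := by positivity
      calc ‖f' y‖ ≤ c y * B δ y := hfy ▸ bound y hy
        _ < B δ y * (c y + δ) := by nlinarith
  have hcont : ContinuousAt (fun δ => B δ x) 0 := by fun_prop
  have hlim := hcont.tendsto.mono_left (nhdsWithin_le_nhds (s := Ioi 0))
  simp only [B, add_zero, zero_mul] at hlim
  exact ge_of_tendsto hlim (eventually_nhdsWithin_of_forall hB)

theorem not_tendsto_norm_zero_of_norm_deriv_le_rpow {E : Type*} [NormedAddCommGroup E]
    [NormedSpace ℝ E] {f f' : ℝ → E} {C α t₀ : ℝ} (hC : 0 ≤ C) (hα : 0 < α)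
    (hf : ∀ t ∈ Ioc 0 t₀, HasDerivAt f (f' t) t)
    (bound : ∀ t ∈ Ioc 0 t₀, ‖f' t‖ ≤ C * t ^ (α - 1) * ‖f t‖) (ht₀ : 0 < t₀) (hne : f t₀ ≠ 0) :
    ¬ Tendsto (fun t => ‖f t‖) (𝓝[>] 0) (𝓝 0) := by
  set Γ : ℝ → ℝ := fun x => C / α * x ^ α
  have hΓ : ∀ x, 0 < x → HasDerivAt Γ (C * x ^ (α - 1)) x := fun x hx =>
    ((Real.hasDerivAt_rpow_const (Or.inl hx.ne')).const_mul (C / α)).congr_deriv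
      (by field_simp)
  -- `t ↦ t ^ (α - 1)` is integrable at `0`, so `log ‖f‖` stays bounded below
  have lower : ∀ a ∈ Ioc 0 t₀, ‖f t₀‖ * Real.exp (-Γ t₀) ≤ ‖f a‖ := fun a ha => by
    have hsub : Icc a t₀ ⊆ Ioc 0 t₀ := fun x hx => ⟨ha.1.trans_le hx.1, hx.2⟩
    have hgron := norm_le_mul_exp_sub_of_norm_deriv_right_le
      (fun x hx => (hf x (hsub hx)).continuousAt.continuousWithinAt)
      (fun x hx => (hf x (hsub (Ico_subset_Icc_self hx))).hasDerivWithinAt)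
      (fun x hx => (hΓ x (hsub hx).1).continuousAt.continuousWithinAt)
      (fun x hx => (hΓ x (hsub (Ico_subset_Icc_self hx)).1).hasDerivWithinAt)
      (fun x hx => bound x (hsub (Ico_subset_Icc_self hx))) t₀ ⟨ha.2, le_rfl⟩
    have hΓa : 0 ≤ Γ a := mul_nonneg (div_nonneg hC hα.le) (Real.rpow_nonneg ha.1.le α)
    calc ‖f t₀‖ * Real.exp (-Γ t₀) ≤ ‖f a‖ * Real.exp (Γ t₀ - Γ a) * Real.exp (-Γ t₀) := by
          gcongr
      _ ≤ ‖f a‖ := by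
          rw [mul_assoc, ← Real.exp_add]
          exact mul_le_of_le_one_right (norm_nonneg _) (Real.exp_le_one_iff.2 (by linarith))
  intro hlim
  have hδ : 0 < ‖f t₀‖ * Real.exp (-Γ t₀) := mul_pos (norm_pos_iff.2 hne) (Real.exp_pos _)
  obtain ⟨a, hsmall, ha⟩ := ((hlim.eventually_lt_const hδ).and
    (Ioc_mem_nhdsGT ht₀)).exists
  exact (lower a ha).not_gt hsmall

theorem Real.sum_mul_prod_rpow_inv_card_le_sum_sq {ι : Type*} [Fintype ι] [Nonempty ι]
    (b : ι → ℝ) (hb : ∀ i, 0 ≤ b i) :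
    (∑ i, b i) * (∏ i, b i) ^ (Fintype.card ι : ℝ)⁻¹ ≤ ∑ i, b i ^ 2 := by
  have hcard : (0 : ℝ) < Fintype.card ι := Nat.cast_pos.2 Fintype.card_pos
  have amgm : (∏ i, b i) ^ (Fintype.card ι : ℝ)⁻¹ ≤ (∑ i, b i) / Fintype.card ι := by
    simpa using Real.geom_mean_le_arith_mean Finset.univ (fun _ => 1) b
      (fun _ _ => zero_le_one) (by simpa using hcard) (fun i _ => hb i)
  have cauchySchwarz : (∑ i, b i) ^ 2 ≤ Fintype.card ι * ∑ i, b i ^ 2 := by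
    simpa using sq_sum_le_card_mul_sum_sq (s := Finset.univ) (f := b)
  calc (∑ i, b i) * (∏ i, b i) ^ (Fintype.card ι : ℝ)⁻¹
      ≤ (∑ i, b i) * ((∑ i, b i) / Fintype.card ι) :=
        mul_le_mul_of_nonneg_left amgm (Finset.sum_nonneg fun i _ => hb i)
    _ = (∑ i, b i) ^ 2 / Fintype.card ι := by ring
    _ ≤ ∑ i, b i ^ 2 := by rwa [div_le_iff₀ hcard, mul_comm]

theorem sum_inv_norm_le_norm_prod_rpow_mul {ι : Type*} [Fintype ι] [Nonempty ι]
    {z : ι → ℂ} (hz : ∀ i, z i ≠ 0) :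
    ∑ i, ‖z i‖⁻¹ ≤ ‖∏ i, z i‖ ^ (Fintype.card ι : ℝ)⁻¹ * ∑ i, (normSq (z i))⁻¹ := by
  have hP : 0 < ‖∏ i, z i‖ := norm_pos_iff.2 (Finset.prod_ne_zero_iff.2 fun i _ => hz i)
  have h := Real.sum_mul_prod_rpow_inv_card_le_sum_sq (fun i => ‖z i‖⁻¹) (fun i => by positivity)
  rw [Finset.prod_inv_distrib, ← norm_prod, Real.inv_rpow hP.le, ← div_eq_mul_inv,
    div_le_iff₀ (by positivity)] at h
  simpa [normSq_eq_norm_sq, mul_comm] using h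

theorem norm_sum_div_normSq_mul_mul_conj_sub_one_le {ι : Type*} [Fintype ι] [DecidableEq ι]
    {z : ι → ℂ} (hz : ∀ i, z i ≠ 0) {G : ι → ι → ℂ} {δ : ℝ}
    (hG : ∀ i j, ‖G i j - if i = j then 1 else 0‖ ≤ δ) (k : ι) :
    ‖(∑ i, z i / normSq (z i) * G i k) * conj (z k) - 1‖ ≤ δ * ‖z k‖ * ∑ i, ‖z i‖⁻¹ := by
  have hdiag : (∑ i, z i / normSq (z i) * (if i = k then 1 else 0)) * conj (z k) = 1 := by
    have hk : (normSq (z k) : ℂ) ≠ 0 := ofReal_ne_zero.2 (normSq_pos.2 (hz k)).ne'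
    simp [div_mul_eq_mul_div, mul_conj, hk]
  calc ‖(∑ i, z i / normSq (z i) * G i k) * conj (z k) - 1‖
      = ‖∑ i, z i / normSq (z i) * (G i k - if i = k then 1 else 0) * conj (z k)‖ := by
        simp only [mul_sub, sub_mul, Finset.sum_sub_distrib, ← Finset.sum_mul, hdiag]
    _ ≤ ∑ i, ‖z i‖⁻¹ * δ * ‖z k‖ := by
        refine norm_sum_le_of_le _ fun i _ => ?_
        rw [norm_mul, norm_mul, norm_div, norm_conj, norm_real,
          Real.norm_of_nonneg (normSq_nonneg _), normSq_eq_norm_sq, pow_two,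
          div_mul_cancel_right₀ (norm_ne_zero_iff.2 (hz i))]
        gcongr
        exact hG i k
    _ = δ * ‖z k‖ * ∑ i, ‖z i‖⁻¹ := by
        rw [Finset.mul_sum]
        exact Finset.sum_congr rfl fun i _ => by ring

section NormSqDiff

variable {ι : Type*}

def normSqDiff (z : ι → ℂ) : ι × ι → ℝ := fun p => normSq (z p.1) - normSq (z p.2)

def normSqDiffDeriv (z v : ι → ℂ) : ι × ι → ℝ := fun p =>
  2 * (v p.1 * conj (z p.1) - v p.2 * conj (z p.2)).re

theorem rhoMax_eq_norm_normSqDiff {n : ℕ} (z : Fin n → ℂ) : rhoMax n z = ‖normSqDiff z‖ := by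
  refine le_antisymm (Real.iSup_le (fun i => Real.iSup_le (fun j => ?_) (norm_nonneg _))
    (norm_nonneg _)) ((pi_norm_le_iff_of_nonneg (Real.iSup_nonneg fun i =>
      Real.iSup_nonneg fun j => abs_nonneg _)).2 fun p => ?_)
  · exact norm_le_pi_norm (normSqDiff z) (i, j)
  · exact (le_ciSup (Set.finite_range _).bddAbove p.2).trans
      (le_ciSup (f := fun i => ⨆ j, |normSq (z i) - normSq (z j)|)
        (Set.finite_range _).bddAbove p.1)

theorem HasDerivAt.normSqDiff [Fintype ι] {φ : ℝ → ι → ℂ} {v : ι → ℂ} {t : ℝ}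
    (hφ : HasDerivAt φ v t) :
    HasDerivAt (fun τ => normSqDiff (φ τ)) (normSqDiffDeriv (φ t) v) t := by
  have hnormSq : ∀ i, HasDerivAt (fun τ => normSq (φ τ i)) (2 * (v i * conj (φ t i)).re) t :=
    fun i => by
      simpa [normSq_eq_norm_sq, Complex.inner, mul_comm] using (hasDerivAt_pi.1 hφ i).norm_sq
  refine hasDerivAt_pi.2 fun p => ((hnormSq p.1).sub (hnormSq p.2)).congr_deriv ?_
  simp only [normSqDiffDeriv, sub_re]
  ring

end NormSqDiff

theorem norm_Vpert_mul_conj_sub_le {n : ℕ} (hn : 0 < n) {g : (Fin n → ℂ) → Fin n → Fin n → ℂ}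
    {u : (Fin n → ℂ) → ℝ} {K t : ℝ} {z : Fin n → ℂ} (hK : 0 ≤ K)
    (hg : ∀ i j, ‖g z i j - if i = j then 1 else 0‖ ≤ K * ‖z‖) (hu : |u z| ≤ K * ‖z‖)
    (hb : ‖z‖ ≤ 1) (hz : ∀ i, z i ≠ 0) (ht : 0 < t) (hs : sProd n z = t) (i j : Fin n) :
    ‖Vpert n g u z i * conj (z i) - Vpert n g u z j * conj (z j)‖
      ≤ 2 * K * (1 + K) * ‖z‖ ^ 2 * t ^ ((1 : ℝ) / n - 1) := by
  have : Nonempty (Fin n) := ⟨⟨0, hn⟩⟩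
  set N : Fin n → ℂ := fun k => (∑ m, z m / normSq (z m) * g z m k) * conj (z k)
  set S₁ : ℝ := ∑ m, ‖z m‖⁻¹
  set S₂ : ℝ := ∑ m, (normSq (z m))⁻¹
  have hS₂ : 0 < S₂ := Finset.sum_pos (fun m _ => inv_pos.2 (normSq_pos.2 (hz m)))
    Finset.univ_nonempty
  have hV : ∀ k, Vpert n g u z k * conj (z k) = (1 + u z : ℝ) * N k / (t * S₂ : ℝ) := by
    intro k
    simp only [Vpert, hs, N, S₂]
    push_cast
    ring
  have hN : ∀ k, ‖N k - 1‖ ≤ K * ‖z‖ ^ 2 * S₁ := fun k =>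
    (norm_sum_div_normSq_mul_mul_conj_sub_one_le hz hg k).trans
      (by rw [pow_two, ← mul_assoc]; gcongr; exact norm_le_pi_norm z k)
  have hS₁ : S₁ ≤ t ^ ((1 : ℝ) / n) * S₂ := by
    have h := sum_inv_norm_le_norm_prod_rpow_mul hz
    rwa [← sProd, hs, norm_real, Real.norm_of_nonneg ht.le, Fintype.card_fin, ← one_div] at h
  have hu' : |1 + u z| ≤ 1 + K := (abs_add_le _ _).trans (by
    rw [abs_one]; nlinarith [norm_nonneg z])
  calc ‖Vpert n g u z i * conj (z i) - Vpert n g u z j * conj (z j)‖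
      = |1 + u z| * ‖N i - N j‖ / (t * S₂) := by
        rw [hV, hV, ← sub_div, ← mul_sub, norm_div, norm_mul, norm_real, norm_real,
          Real.norm_eq_abs, Real.norm_of_nonneg (by positivity)]
    _ ≤ (1 + K) * (2 * (K * ‖z‖ ^ 2 * (t ^ ((1 : ℝ) / n) * S₂))) / (t * S₂) := by
        gcongr
        calc ‖N i - N j‖ ≤ ‖N i - 1‖ + ‖N j - 1‖ := by
              simpa only [norm_sub_rev 1 (N j)] using
                norm_sub_le_norm_sub_add_norm_sub (N i) 1 (N j)
          _ ≤ 2 * (K * ‖z‖ ^ 2 * (t ^ ((1 : ℝ) / n) * S₂)) := by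
            have := hN i; have := hN j
            have : K * ‖z‖ ^ 2 * S₁ ≤ K * ‖z‖ ^ 2 * (t ^ ((1 : ℝ) / n) * S₂) := by gcongr
            linarith
    _ = 2 * K * (1 + K) * ‖z‖ ^ 2 * t ^ ((1 : ℝ) / n - 1) := by
        rw [Real.rpow_sub ht, Real.rpow_one]
        field_simp

theorem norm_normSqDiffDeriv_Vpert_le {n : ℕ} (hn : 0 < n) {g : (Fin n → ℂ) → Fin n → Fin n → ℂ}
    {u : (Fin n → ℂ) → ℝ} {K ε t : ℝ} {z : Fin n → ℂ} (hK : 0 ≤ K) (hε : 0 < ε)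
    (hg : ∀ i j, ‖g z i j - if i = j then 1 else 0‖ ≤ K * ‖z‖) (hu : |u z| ≤ K * ‖z‖)
    (hb : ‖z‖ ≤ 1) (hz : ∀ i, z i ≠ 0) (ht : 0 < t) (hs : sProd n z = t)
    (hout : ε * ‖z‖ ^ 2 ≤ ‖normSqDiff z‖) :
    ‖normSqDiffDeriv z (Vpert n g u z)‖
      ≤ 4 * K * (1 + K) / ε * t ^ ((1 : ℝ) / n - 1) * ‖normSqDiff z‖ := by
  refine (pi_norm_le_iff_of_nonneg (by positivity)).2 fun p => ?_
  calc ‖normSqDiffDeriv z (Vpert n g u z) p‖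
      ≤ 2 * (2 * K * (1 + K) * ‖z‖ ^ 2 * t ^ ((1 : ℝ) / n - 1)) := by
        rw [normSqDiffDeriv, Real.norm_eq_abs, abs_mul, abs_two]
        gcongr
        exact (abs_re_le_norm _).trans
          (norm_Vpert_mul_conj_sub_le hn hK hg hu hb hz ht hs p.1 p.2)
    _ = 4 * K * (1 + K) / ε * t ^ ((1 : ℝ) / n - 1) * (ε * ‖z‖ ^ 2) := by
        field_simp
        ring
    _ ≤ 4 * K * (1 + K) / ε * t ^ ((1 : ℝ) / n - 1) * ‖normSqDiff z‖ := by gcongr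

/-- along a solution curve of `V` (parametrised by `t = s`, staying on
`{Im s = 0}` in the region `‖z‖ ≤ 1`, with all coordinates nonzero) that remains
outside the cone neighbourhood `U_ε = {ρ < ε‖z‖²}` of `S₀⁺ = {ρ = 0}`, one has the
differential inequality `d(log ρ)/dt ≤ C t^{1/n − 1}`, and consequently
`lim_{t→0} ρ(t) ≠ 0`. -/
theorem stmt_18 (n : ℕ) (hn : 0 < n)
    (g : (Fin n → ℂ) → Fin n → Fin n → ℂ) (u : (Fin n → ℂ) → ℝ)
    (K ε t₀ : ℝ) (hK : 0 < K) (hε : 0 < ε) (ht₀ : 0 < t₀)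
    (hg : ∀ z i j, ‖g z i j - if i = j then 1 else 0‖ ≤ K * ‖z‖)
    (hu : ∀ z, |u z| ≤ K * ‖z‖)
    (φ : ℝ → Fin n → ℂ)
    (hφd : ∀ t ∈ Set.Ioc (0 : ℝ) t₀, HasDerivAt φ (Vpert n g u (φ t)) t)
    (hpar : ∀ t ∈ Set.Ioc (0 : ℝ) t₀, sProd n (φ t) = (t : ℂ))
    (hnz : ∀ t ∈ Set.Ioc (0 : ℝ) t₀, ∀ i, φ t i ≠ 0)
    (hbd : ∀ t ∈ Set.Ioc (0 : ℝ) t₀, ‖φ t‖ ≤ 1)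
    (hout : ∀ t ∈ Set.Ioc (0 : ℝ) t₀, ε * ‖φ t‖ ^ 2 ≤ rhoMax n (φ t)) :
    (∃ C : ℝ, 0 < C ∧ ∀ t ∈ Set.Ioc (0 : ℝ) t₀, ∀ d : ℝ,
      HasDerivAt (fun τ => Real.log (rhoMax n (φ τ))) d t →
        d ≤ C * t ^ ((1 : ℝ) / n - 1)) ∧
    ¬ Filter.Tendsto (fun t => rhoMax n (φ t)) (nhdsWithin 0 (Set.Ioi 0)) (nhds 0) := by
  set C := 4 * K * (1 + K) / ε
  have hC : 0 < C := by positivity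
  simp only [rhoMax_eq_norm_normSqDiff] at hout ⊢
  have hderiv : ∀ t ∈ Ioc 0 t₀, HasDerivAt (fun τ => normSqDiff (φ τ))
      (normSqDiffDeriv (φ t) (Vpert n g u (φ t))) t := fun t ht => (hφd t ht).normSqDiff
  have hbound : ∀ t ∈ Ioc 0 t₀, ‖normSqDiffDeriv (φ t) (Vpert n g u (φ t))‖
      ≤ C * t ^ ((1 : ℝ) / n - 1) * ‖normSqDiff (φ t)‖ := fun t ht =>
    norm_normSqDiffDeriv_Vpert_le hn hK.le hε (hg _) (hu _) (hbd t ht) (hnz t ht) ht.1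
      (hpar t ht) (hout t ht)
  have hne : ∀ t ∈ Ioc 0 t₀, normSqDiff (φ t) ≠ 0 := fun t ht => by
    have : 0 < ‖φ t‖ := norm_pos_iff.2 fun h => hnz t ht ⟨0, hn⟩ (by simp [h])
    exact norm_pos_iff.1 ((by positivity : 0 < ε * ‖φ t‖ ^ 2).trans_le (hout t ht))
  refine ⟨⟨C, hC, fun t ht d hd => ?_⟩, ?_⟩
  · calc d ≤ ‖normSqDiffDeriv (φ t) (Vpert n g u (φ t))‖ / ‖normSqDiff (φ t)‖ :=
          le_div_norm_of_hasDerivAt_log_norm (hderiv t ht) (hne t ht) hd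
      _ ≤ C * t ^ ((1 : ℝ) / n - 1) :=
          div_le_of_le_mul₀ (norm_nonneg _) (mul_nonneg hC.le (Real.rpow_nonneg ht.1.le _))
            (hbound t ht)
  · exact not_tendsto_norm_zero_of_norm_deriv_le_rpow (C := C) (α := 1 / n) hC.le
      (by positivity) hderiv hbound ht₀ (hne t₀ ⟨ht₀, le_rfl⟩)
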